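/- For all integers 0 ≤ i ≤ d and 0 ≤ j ≤ e, the polynomial identity qbase(i,x,d)_q · qbase(j,x,e)_q = Σ_{ℓ=0}^{d+e} q^{(ℓ-e-i)(ℓ-d-j)} qbinom(d+j-i, ℓ-i)_q · qbinom(e+i-j, ℓ-j)_q · qbase(ℓ, x, d+e)_q holds in ℚ(q)[x]. -/

import Mathlib

open Polynomial Finset

noncomputable section

/-- The field ℚ(q) of rational functions. -/
abbrev K : Type := RatFunc ℚ

/-- The variable q of ℚ(q). -/
def qq : K := RatFunc.X

/-- The q-integer [n]_t = (t^n - 1)/(t - 1), for n ∈ ℤ. -/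
def qint (t : K) (n : ℤ) : K := (t ^ n - 1) / (t - 1)

/-- The q-factorial [n]!_t. -/
def qfact (t : K) (n : ℕ) : K := ∏ i ∈ range n, qint t (i + 1)

/-- The generalized q-binomial qbinom(m, n)_t = [m]_t [m-1]_t ⋯ [m-n+1]_t / [n]!_t. -/
def qbinom (t : K) (m : ℤ) (n : ℕ) : K := (∏ i ∈ range n, qint t (m - i)) / qfact t n

/-- The q-binomial with the vanishing convention: 0 unless 0 ≤ n ≤ m. -/
def qbinomv (t : K) (m n : ℤ) : K :=
  if 0 ≤ n ∧ n ≤ m then (∏ i ∈ range n.toNat, qint t (m - i)) / qfact t n.toNat else 0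

/-- The polynomial [n, x]_t = [n]_t + t^n x. -/
def qb (t : K) (n : ℤ) : Polynomial K := C (qint t n) + C (t ^ n) * X

/-- The polynomial qbase(m, x, n)_t = [m-n+1,x]_t ⋯ [m,x]_t / [n]!_t. -/
def qbase (t : K) (m : ℤ) (n : ℕ) : Polynomial K :=
  (∏ i ∈ range n, qb t (m - n + 1 + i)) * C (qfact t n)⁻¹

/-!
Induct on `e`. Since `[a, x]` is affine in `q ^ a`, it is a combination of the two factors
`[m - N, x]` and `[m + 1, x]` that extend the product `qbase(m, x, N)` at either end; so
`[a, x] · qbase(m, x, N)` is a combination of `qbase(m, x, N + 1)` and `qbase(m + 1, x, N + 1)`.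
Multiplying the expansion for `(j, e)` (or for `(e, e)` when `j = e + 1`) by the factor that turns
`qbase(j, x, e)` into `[e + 1] qbase(j, x, e + 1)` therefore gives the expansion for `(j, e + 1)`,
provided the coefficients obey the resulting two-term recurrence; after factoring out the power of
`q`, that recurrence is `q`-Pascal's rule for one Gaussian binomial together with the absorption
identity `[n] qbinom(m, n) = [m - n + 1] qbinom(m, n - 1)`.
-/

lemma Transcendental.not_isOfFinOrder {R A : Type*} [CommRing R] [Nontrivial R] [Ring A]
    [Algebra R A] {t : A} (ht : Transcendental R t) : ¬IsOfFinOrder t := fun h => by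
  obtain ⟨n, hn, h1⟩ := h.exists_pow_eq_one
  exact ht.pow hn (h1 ▸ isAlgebraic_one)

lemma zpow_ne_one_of_not_isOfFinOrder {G : Type*} [DivisionMonoid G] {x : G}
    (hx : ¬IsOfFinOrder x) {n : ℤ} (hn : n ≠ 0) : x ^ n ≠ 1 :=
  fun h => hx (isOfFinOrder_iff_zpow_eq_one.mpr ⟨n, hn, h⟩)

lemma qq_ne_zero : qq ≠ 0 := RatFunc.X_ne_zero

-- `RatFunc.transcendental_X` uses RatFunc's own `ℚ`-algebra instance, not the one that `K`
-- infers as a field of characteristic zero.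
lemma not_isOfFinOrder_qq : ¬IsOfFinOrder qq :=
  @Transcendental.not_isOfFinOrder ℚ K _ _ _ (RatFunc.instAlgebraOfPolynomial ℚ ℚ) _
    RatFunc.transcendental_X

variable {t : K}

lemma qint_zero (t : K) : qint t 0 = 0 := by simp [qint]

lemma qint_add (h0 : t ≠ 0) (a b : ℤ) : qint t (a + b) = qint t a + t ^ a * qint t b := by
  simp only [qint, zpow_add₀ h0]
  ring

lemma qint_ne_zero (ht : ¬IsOfFinOrder t) {n : ℤ} (hn : n ≠ 0) : qint t n ≠ 0 :=
  div_ne_zero (sub_ne_zero.mpr (zpow_ne_one_of_not_isOfFinOrder ht hn))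
    (sub_ne_zero.mpr (by simpa using zpow_ne_one_of_not_isOfFinOrder ht one_ne_zero))

lemma qfact_succ (t : K) (n : ℕ) : qfact t (n + 1) = qfact t n * qint t (n + 1) := by
  rw [qfact, prod_range_succ, qfact]

lemma qfact_ne_zero (ht : ¬IsOfFinOrder t) (n : ℕ) : qfact t n ≠ 0 :=
  prod_ne_zero_iff.mpr fun _ _ => qint_ne_zero ht (by omega)

lemma qbinomv_of_neg {m n : ℤ} (h : n < 0) : qbinomv t m n = 0 := by
  rw [qbinomv, if_neg (by omega)]

lemma qbinomv_of_lt {m n : ℤ} (h : m < n) : qbinomv t m n = 0 := by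
  rw [qbinomv, if_neg (by omega)]

lemma qbinomv_natCast {m : ℤ} {k : ℕ} (h : k ≤ m) :
    qbinomv t m k = (∏ i ∈ range k, qint t (m - i)) / qfact t k := by
  rw [qbinomv, if_pos ⟨k.cast_nonneg, h⟩, Int.toNat_natCast]

lemma qbinomv_zero {m : ℤ} (h : 0 ≤ m) : qbinomv t m 0 = 1 := by
  simpa [qfact] using qbinomv_natCast (t := t) (k := 0) h

lemma qbinomv_self (ht : ¬IsOfFinOrder t) (k : ℕ) : qbinomv t k k = 1 := by
  have hprod : ∏ i ∈ range k, qint t ((k : ℤ) - i) = qfact t k := by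
    rw [qfact, ← prod_range_reflect]
    refine prod_congr rfl fun i hi => ?_
    rw [mem_range] at hi
    congr 1
    omega
  rw [qbinomv_natCast le_rfl, hprod, div_self (qfact_ne_zero ht k)]

lemma qint_mul_qbinomv (ht : ¬IsOfFinOrder t) (m n : ℤ) :
    qint t n * qbinomv t m n = qint t (m - n + 1) * qbinomv t m (n - 1) := by
  rcases le_or_gt n 0 with hn | hn
  · rw [qbinomv_of_neg (by omega : n - 1 < 0), mul_zero]
    rcases hn.lt_or_eq with hn | rfl
    · rw [qbinomv_of_neg hn, mul_zero]
    · rw [qint_zero, zero_mul]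
  obtain ⟨k, rfl⟩ : ∃ k : ℕ, n = k + 1 := ⟨(n - 1).toNat, by omega⟩
  rw [add_sub_cancel_right]
  rcases le_or_gt ((k : ℤ) + 1) m with hkm | hkm
  · have hk : qint t (k + 1) ≠ 0 := qint_ne_zero ht (by omega)
    rw [show (k : ℤ) + 1 = (k + 1 : ℕ) by push_cast; ring, qbinomv_natCast hkm,
      qbinomv_natCast (by omega), prod_range_succ, qfact_succ]
    rw [show m - (k + 1 : ℕ) + 1 = m - k by push_cast; ring]
    field_simp
    push_cast
    ring
  · rw [qbinomv_of_lt hkm]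
    rcases (show m ≤ k by omega).lt_or_eq with hmk | rfl
    · rw [qbinomv_of_lt hmk, mul_zero, mul_zero]
    · rw [show (k : ℤ) - (k + 1) + 1 = 0 by ring, qint_zero, mul_zero, zero_mul]

lemma qint_sub_mul_qbinomv_succ {m : ℤ} (hm : 0 ≤ m) (n : ℤ) :
    qint t (m + 1 - n) * qbinomv t (m + 1) n = qint t (m + 1) * qbinomv t m n := by
  rcases lt_or_ge m n with hmn | hnm
  · rw [qbinomv_of_lt hmn, mul_zero]
    rcases (show m + 1 ≤ n by omega).lt_or_eq with hmn | rfl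
    · rw [qbinomv_of_lt hmn, mul_zero]
    · rw [sub_self, qint_zero, zero_mul]
  rcases lt_trichotomy n 0 with hn | rfl | hn
  · rw [qbinomv_of_neg hn, qbinomv_of_neg hn, mul_zero, mul_zero]
  · rw [qbinomv_zero hm, qbinomv_zero (by omega), sub_zero]
  obtain ⟨k, rfl⟩ : ∃ k : ℕ, n = k + 1 := ⟨(n - 1).toNat, by omega⟩
  rw [show (k : ℤ) + 1 = (k + 1 : ℕ) by push_cast; ring, qbinomv_natCast (by omega),
    qbinomv_natCast hnm, prod_range_succ', prod_range_succ]
  rw [show m + 1 - (k + 1 : ℕ) = m - k by push_cast; ring]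
  have hshift : ∀ i ∈ range k, qint t (m + 1 - (i + 1 : ℕ)) = qint t (m - i) := fun i _ => by
    congr 1; push_cast; ring
  rw [prod_congr rfl hshift, Nat.cast_zero, sub_zero]
  ring

lemma qbinomv_succ (h0 : t ≠ 0) (ht : ¬IsOfFinOrder t) {m : ℤ} (hm : 0 ≤ m) (n : ℤ) :
    qbinomv t (m + 1) n = t ^ n * qbinomv t m n + qbinomv t m (n - 1) := by
  rcases eq_or_ne n (m + 1) with rfl | hn
  · lift m to ℕ using hm
    rw [qbinomv_of_lt (lt_add_one _), add_sub_cancel_right, mul_zero, zero_add,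
      show (m : ℤ) + 1 = (m + 1 : ℕ) by push_cast; ring, qbinomv_self ht, qbinomv_self ht]
  refine mul_left_cancel₀ (a := qint t (m + 1 - n)) (qint_ne_zero ht (by omega)) ?_
  have hlower := qint_mul_qbinomv ht m n
  rw [show m - n + 1 = m + 1 - n by ring] at hlower
  have hsplit : qint t (m + 1) = qint t n + t ^ n * qint t (m + 1 - n) := by
    rw [← qint_add h0, add_sub_cancel]
  linear_combination qint_sub_mul_qbinomv_succ hm n + qbinomv t m n * hsplit + hlower

lemma qbase_zero (t : K) (m : ℤ) : qbase t m 0 = 1 := by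
  simp [qbase, qfact]

lemma C_qint_mul_qbase_succ (ht : ¬IsOfFinOrder t) (m : ℤ) (n : ℕ) :
    C (qint t (n + 1)) * qbase t m (n + 1) =
      (∏ i ∈ range (n + 1), qb t (m - n + i)) * C (qfact t n)⁻¹ := by
  have hn : qint t (n + 1) ≠ 0 := qint_ne_zero ht (by omega)
  simp only [qbase, qfact_succ, push_cast, sub_add_eq_sub_sub, sub_add_cancel]
  rw [mul_left_comm, ← C_mul]
  congr 2
  field_simp

lemma qb_succ_mul_qbase (ht : ¬IsOfFinOrder t) (m : ℤ) (n : ℕ) :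
    qb t (m + 1) * qbase t m n = C (qint t (n + 1)) * qbase t (m + 1) (n + 1) := by
  rw [C_qint_mul_qbase_succ ht, prod_range_succ, qbase]
  ring_nf

lemma qb_sub_mul_qbase (ht : ¬IsOfFinOrder t) (m : ℤ) (n : ℕ) :
    qb t (m - n) * qbase t m n = C (qint t (n + 1)) * qbase t m (n + 1) := by
  rw [C_qint_mul_qbase_succ ht, prod_range_succ', qbase]
  push_cast
  ring_nf

lemma C_zpow_sub_zpow_mul_qb (t : K) (a b c : ℤ) :
    C (t ^ b - t ^ c) * qb t a = C (t ^ a - t ^ c) * qb t b + C (t ^ b - t ^ a) * qb t c := by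
  have hint : (t ^ b - t ^ c) * qint t a =
      (t ^ a - t ^ c) * qint t b + (t ^ b - t ^ a) * qint t c := by
    simp only [qint]
    ring
  have hC := congrArg C hint
  simp only [map_add, map_sub, map_mul] at hC ⊢
  simp only [qb]
  linear_combination hC

lemma qb_mul_qbase (h0 : t ≠ 0) (ht : ¬IsOfFinOrder t) (a ℓ : ℤ) (N : ℕ) :
    qb t a * qbase t ℓ N =
      C (t ^ (a + N - ℓ) * qint t (ℓ + 1 - a)) * qbase t ℓ (N + 1) +
        C (qint t (a + N - ℓ)) * qbase t (ℓ + 1) (N + 1) := by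
  have hne : t ^ (ℓ - N) - t ^ (ℓ + 1) ≠ 0 := by
    rw [sub_ne_zero, Ne, ← div_eq_one_iff_eq (zpow_ne_zero _ h0), ← zpow_sub₀ h0]
    exact zpow_ne_one_of_not_isOfFinOrder ht (by omega)
  refine mul_left_cancel₀ (C_ne_zero.mpr hne) ?_
  have hlow : (t ^ (ℓ - N) - t ^ (ℓ + 1)) * (t ^ (a + N - ℓ) * qint t (ℓ + 1 - a)) =
      (t ^ a - t ^ (ℓ + 1)) * qint t (N + 1) := by
    simp only [qint, zpow_sub₀ h0, zpow_add₀ h0, zpow_one, zpow_natCast]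
    field_simp
    ring
  have hhigh : (t ^ (ℓ - N) - t ^ (ℓ + 1)) * qint t (a + N - ℓ) =
      (t ^ (ℓ - N) - t ^ a) * qint t (N + 1) := by
    simp only [qint, zpow_sub₀ h0, zpow_add₀ h0, zpow_one, zpow_natCast]
    field_simp
    ring
  have hlow' := congrArg C hlow
  have hhigh' := congrArg C hhigh
  simp only [map_mul] at hlow' hhigh' ⊢
  linear_combination qbase t ℓ N * C_zpow_sub_zpow_mul_qb t a (ℓ - N) (ℓ + 1) +
    C (t ^ a - t ^ (ℓ + 1)) * qb_sub_mul_qbase ht ℓ N +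
    C (t ^ (ℓ - N) - t ^ a) * qb_succ_mul_qbase ht ℓ N -
    qbase t ℓ (N + 1) * hlow' - qbase t (ℓ + 1) (N + 1) * hhigh'

lemma qb_mul_sum_qbase (h0 : t ≠ 0) (ht : ¬IsOfFinOrder t) (a : ℤ) (N : ℕ)
    (c : ℤ → K) (hbot : c (-1) = 0) (htop : c (N + 1) = 0) :
    qb t a * ∑ ℓ ∈ range (N + 1), C (c ℓ) * qbase t ℓ N =
      ∑ ℓ ∈ range (N + 2), C (c ℓ * (t ^ (a + N - ℓ) * qint t (ℓ + 1 - a)) +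
        c (ℓ - 1) * qint t (a + N - (ℓ - 1))) * qbase t ℓ (N + 1) := by
  have hterm : ∀ ℓ : ℕ, qb t a * (C (c ℓ) * qbase t ℓ N) =
      C (c ℓ * (t ^ (a + N - ℓ) * qint t (ℓ + 1 - a))) * qbase t ℓ (N + 1) +
        C (c ℓ * qint t (a + N - ℓ)) * qbase t (ℓ + 1) (N + 1) := fun ℓ => by
    rw [mul_left_comm, qb_mul_qbase h0 ht]
    simp only [C_mul]
    ring
  simp only [mul_sum, hterm, sum_add_distrib, map_add, add_mul]
  refine congrArg₂ (· + ·) ?_ ?_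
  · rw [sum_range_succ _ (N + 1)]
    simp only [Nat.cast_add, Nat.cast_one, htop, zero_mul, map_zero, add_zero]
  · rw [sum_range_succ' _ (N + 1)]
    simp only [Nat.cast_add, Nat.cast_one, add_sub_cancel_right, Nat.cast_zero, zero_sub, hbot,
      zero_mul, map_zero, add_zero]

def qbaseProductCoeff (t : K) (i d j e : ℕ) (ℓ : ℤ) : K :=
  t ^ ((ℓ - e - i) * (ℓ - d - j)) * qbinomv t ((d : ℤ) + j - i) (ℓ - i) *
    qbinomv t ((e : ℤ) + i - j) (ℓ - j)

lemma qint_mul_qbaseProductCoeff_succ (h0 : t ≠ 0) (ht : ¬IsOfFinOrder t)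
    {i d j e : ℕ} (hje : j ≤ e) (ℓ : ℤ) :
    qint t (e + 1) * qbaseProductCoeff t i d j (e + 1) ℓ =
      qbaseProductCoeff t i d j e ℓ * (t ^ ((d : ℤ) + j - ℓ) * qint t (ℓ + 1 + e - j)) +
        qbaseProductCoeff t i d j e (ℓ - 1) * qint t ((d : ℤ) + 1 + j - ℓ) := by
  have hA := qint_mul_qbinomv ht ((d : ℤ) + j - i) (ℓ - i)
  have hB := qint_mul_qbinomv ht ((e : ℤ) + i - j) (ℓ - j)
  have hpascal := qbinomv_succ h0 ht (m := (e : ℤ) + i - j) (by omega) (ℓ - j)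
  have hsplit₁ := qint_add h0 (ℓ - j) (e + 1)
  have hsplit₂ := qint_add h0 (e + 1 + i - ℓ) (ℓ - i)
  have hpow₁ : t ^ ((ℓ - e - i) * (ℓ - d - j)) * t ^ ((d : ℤ) + j - ℓ) =
      t ^ ((ℓ - (e + 1) - i) * (ℓ - d - j)) := by
    rw [← zpow_add₀ h0]; ring_nf
  have hpow₂ : t ^ ((ℓ - 1 - e - i) * (ℓ - 1 - d - j)) =
      t ^ ((ℓ - (e + 1) - i) * (ℓ - d - j)) * t ^ ((e : ℤ) + 1 + i - ℓ) := by
    rw [← zpow_add₀ h0]; ring_nf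
  simp only [qbaseProductCoeff]
  push_cast
  rw [sub_right_comm ℓ 1 (i : ℤ), sub_right_comm ℓ 1 (j : ℤ)]
  set P := t ^ ((ℓ - (e + 1) - i) * (ℓ - d - j))
  set A := qbinomv t ((d : ℤ) + j - i) (ℓ - i)
  set A' := qbinomv t ((d : ℤ) + j - i) (ℓ - i - 1)
  set B := qbinomv t ((e : ℤ) + i - j) (ℓ - j)
  set B' := qbinomv t ((e : ℤ) + i - j) (ℓ - j - 1)
  linear_combination (norm := ring_nf)
    qint t (e + 1) * P * A * hpascal - A * B * qint t (ℓ + 1 + e - j) * hpow₁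
    - A' * B' * qint t ((d : ℤ) + 1 + j - ℓ) * hpow₂ - P * A * B * hsplit₁
    + P * t ^ ((e : ℤ) + 1 + i - ℓ) * B' * hA - P * A * hB + P * A * B' * hsplit₂

lemma qint_mul_qbaseProductCoeff_succ_succ (h0 : t ≠ 0) (ht : ¬IsOfFinOrder t)
    {i d : ℕ} (hid : i ≤ d) (e : ℕ) (ℓ : ℤ) :
    qint t (e + 1) * qbaseProductCoeff t i d (e + 1) (e + 1) ℓ =
      qbaseProductCoeff t i d e e ℓ * (t ^ ((d : ℤ) + 2 * e + 1 - ℓ) * qint t (ℓ - e)) +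
        qbaseProductCoeff t i d e e (ℓ - 1) * qint t ((d : ℤ) + 2 * e + 2 - ℓ) := by
  have hA := qint_mul_qbinomv ht ((d : ℤ) + e - i) (ℓ - i)
  have hB := qint_mul_qbinomv ht (i : ℤ) (ℓ - e)
  have hpascal := qbinomv_succ h0 ht (m := (d : ℤ) + e - i) (by omega) (ℓ - i)
  have hsplit₁ := qint_add h0 (i + 1 + e - ℓ) (ℓ - i)
  have hsplit₂ := qint_add h0 (e + 1) (d + e + 1 - ℓ)
  have hpow₁ : t ^ ((ℓ - e - i) * (ℓ - d - e)) * t ^ ((d : ℤ) + 2 * e + 1 - ℓ) =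
      t ^ ((ℓ - (e + 1) - i) * (ℓ - d - (e + 1))) * t ^ (ℓ - i) := by
    rw [← zpow_add₀ h0, ← zpow_add₀ h0]; ring_nf
  have hpow₂ : t ^ (ℓ - i) * t ^ ((i : ℤ) + 1 + e - ℓ) = t ^ ((e : ℤ) + 1) := by
    rw [← zpow_add₀ h0]; ring_nf
  simp only [qbaseProductCoeff]
  push_cast
  rw [show (ℓ - 1 - e - i) * (ℓ - 1 - d - e) = (ℓ - (e + 1) - i) * (ℓ - d - (e + 1)) by
    ring]
  set P := t ^ ((ℓ - (e + 1) - i) * (ℓ - d - (e + 1)))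
  simp only [add_sub_cancel_left]
  simp only [← sub_sub, sub_right_comm ℓ 1]
  set A := qbinomv t ((d : ℤ) + e - i) (ℓ - i)
  set A' := qbinomv t ((d : ℤ) + e - i) (ℓ - i - 1)
  set B := qbinomv t (i : ℤ) (ℓ - e)
  set B' := qbinomv t (i : ℤ) (ℓ - e - 1)
  linear_combination (norm := ring_nf)
    qint t (e + 1) * P * B' * hpascal - A * B * qint t (ℓ - e) * hpow₁
    - P * t ^ (ℓ - i) * A * hB - P * A' * B' * hsplit₂ + P * t ^ (ℓ - i) * A * B' * hsplit₁
    + P * A * B' * qint t (ℓ - i) * hpow₂ + P * B' * t ^ ((e : ℤ) + 1) * hA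

lemma qbaseProductCoeff_neg_one (t : K) (i d j e : ℕ) :
    qbaseProductCoeff t i d j e (-1) = 0 := by
  rw [qbaseProductCoeff, qbinomv_of_neg (by omega), mul_zero, zero_mul]

lemma qbaseProductCoeff_add_one {i d : ℕ} (hid : i ≤ d) (t : K) (j e : ℕ) :
    qbaseProductCoeff t i d j e (↑(d + e) + 1) = 0 := by
  rw [qbaseProductCoeff, qbinomv_of_lt (m := (e : ℤ) + i - j) (by push_cast; omega), mul_zero]

lemma qbaseProductCoeff_zero_zero (ht : ¬IsOfFinOrder t) {i d : ℕ} (hid : i ≤ d)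
    (ℓ : ℤ) : qbaseProductCoeff t i d 0 0 ℓ = if ℓ = i then 1 else 0 := by
  simp only [qbaseProductCoeff, Nat.cast_zero, sub_zero, add_zero, zero_add]
  split_ifs with h
  · rw [h, sub_self, zero_mul, zpow_zero, one_mul, qbinomv_zero (by omega), qbinomv_self ht,
      one_mul]
  · rcases lt_or_gt_of_ne h with h | h
    · rw [qbinomv_of_neg (by omega), mul_zero, zero_mul]
    · rw [qbinomv_of_lt (m := (i : ℤ)) h, mul_zero]

lemma qbase_mul_qbase_succ_of_qb_mul (h0 : t ≠ 0) (ht : ¬IsOfFinOrder t)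
    {i d j j' e : ℕ} {a : ℤ} (hid : i ≤ d)
    (hprev : qbase t i d * qbase t j' e =
      ∑ ℓ ∈ range (d + e + 1), C (qbaseProductCoeff t i d j' e ℓ) * qbase t ℓ (d + e))
    (hqb : qb t a * qbase t j' e = C (qint t (e + 1)) * qbase t j (e + 1))
    (hrec : ∀ ℓ : ℤ, qint t (e + 1) * qbaseProductCoeff t i d j (e + 1) ℓ =
      qbaseProductCoeff t i d j' e ℓ * (t ^ (a + ↑(d + e) - ℓ) * qint t (ℓ + 1 - a)) +
        qbaseProductCoeff t i d j' e (ℓ - 1) * qint t (a + ↑(d + e) - (ℓ - 1))) :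
    qbase t i d * qbase t j (e + 1) =
      ∑ ℓ ∈ range (d + e + 2),
        C (qbaseProductCoeff t i d j (e + 1) ℓ) * qbase t ℓ (d + e + 1) := by
  refine mul_left_cancel₀ (C_ne_zero.mpr (qint_ne_zero ht (by omega : (e : ℤ) + 1 ≠ 0))) ?_
  calc C (qint t (e + 1)) * (qbase t i d * qbase t j (e + 1))
      = qb t a * (qbase t i d * qbase t j' e) := by rw [mul_left_comm, ← hqb, mul_left_comm]
    _ = _ := by
      rw [hprev, qb_mul_sum_qbase h0 ht a (d + e) _ (qbaseProductCoeff_neg_one t i d j' e)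
        (qbaseProductCoeff_add_one hid t j' e)]
    _ = _ := by simp only [mul_sum, ← mul_assoc, ← C_mul, hrec]

theorem qbase_mul_qbase (h0 : t ≠ 0) (ht : ¬IsOfFinOrder t) {i d j e : ℕ}
    (hid : i ≤ d) (hje : j ≤ e) :
    qbase t i d * qbase t j e =
      ∑ ℓ ∈ range (d + e + 1), C (qbaseProductCoeff t i d j e ℓ) * qbase t ℓ (d + e) := by
  induction e generalizing j with
  | zero =>
    obtain rfl : j = 0 := by omega
    simp only [qbaseProductCoeff_zero_zero ht hid, qbase_zero, mul_one, apply_ite C, C_1, C_0,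
      ite_mul, one_mul, zero_mul, sum_ite_eq', Int.natCast_inj, add_zero, mem_range,
      Nat.lt_succ_of_le hid, if_true]
  | succ e ih =>
    rcases Nat.le_succ_iff.mp hje with hje | rfl
    · refine qbase_mul_qbase_succ_of_qb_mul h0 ht hid (ih hje) (qb_sub_mul_qbase ht j e)
        fun ℓ => ?_
      convert qint_mul_qbaseProductCoeff_succ h0 ht hje ℓ using 4 <;> push_cast <;> ring_nf
    · refine qbase_mul_qbase_succ_of_qb_mul h0 ht hid (ih le_rfl)
        (by exact_mod_cast qb_succ_mul_qbase ht e e) fun ℓ => ?_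
      convert qint_mul_qbaseProductCoeff_succ_succ h0 ht hid e ℓ using 4 <;> push_cast <;> ring_nf

theorem qbase_product (i d j e : ℕ) (hid : i ≤ d) (hje : j ≤ e) :
    qbase qq i d * qbase qq j e = ∑ ℓ ∈ range (d + e + 1),
      C (qq ^ ((((ℓ : ℤ) - e - i) * ((ℓ : ℤ) - d - j))) *
        qbinomv qq ((d : ℤ) + j - i) ((ℓ : ℤ) - i) *
        qbinomv qq ((e : ℤ) + i - j) ((ℓ : ℤ) - j)) *
        qbase qq ℓ (d + e) :=
  qbase_mul_qbase qq_ne_zero not_isOfFinOrder_qq hid hje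

end
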